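/- arXiv:2504.09603 — 2 statements merged into one kernel-verified Lean document; each statement's English description precedes it below -/
import Mathlib

section
/- For every k ≥ 1, every abelian subgroup A of the finite Heisenberg group H_3(ℤ/kℤ) has index at least k. In particular, the family H_3(ℤ/kℤ) is not uniformly virtually abelian: for any constant C, there exists k such that every abelian subgroup of H_3(ℤ/kℤ) has index greater than C. -/
/-- The finite Heisenberg group `H₃(ℤ/kℤ)`, recorded via the three strictly upper
triangular entries `a` (position (1,2)), `b` (position (2,3)), `c` (position (1,3)). -/
@[ext] structure Heis (k : ℕ) where
  a : ZMod k
  b : ZMod k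
  c : ZMod k

namespace Heis

variable {k : ℕ}

instance : Mul (Heis k) := ⟨fun x y => ⟨x.a + y.a, x.b + y.b, x.c + y.c + x.a * y.b⟩⟩
instance : One (Heis k) := ⟨⟨0, 0, 0⟩⟩
instance : Inv (Heis k) := ⟨fun x => ⟨-x.a, -x.b, -x.c + x.a * x.b⟩⟩

@[simp] lemma mul_a (x y : Heis k) : (x * y).a = x.a + y.a := rfl
@[simp] lemma mul_b (x y : Heis k) : (x * y).b = x.b + y.b := rfl
@[simp] lemma mul_c (x y : Heis k) : (x * y).c = x.c + y.c + x.a * y.b := rfl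
@[simp] lemma one_a : (1 : Heis k).a = 0 := rfl
@[simp] lemma one_b : (1 : Heis k).b = 0 := rfl
@[simp] lemma one_c : (1 : Heis k).c = 0 := rfl
@[simp] lemma inv_a (x : Heis k) : x⁻¹.a = -x.a := rfl
@[simp] lemma inv_b (x : Heis k) : x⁻¹.b = -x.b := rfl
@[simp] lemma inv_c (x : Heis k) : x⁻¹.c = -x.c + x.a * x.b := rfl

instance : Group (Heis k) where
  mul_assoc x y z := by ext <;> simp <;> ring
  one_mul x := by ext <;> simp
  mul_one x := by ext <;> simp
  inv_mul_cancel x := by ext <;> simp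

/-- The generator `X`. -/
def X (k : ℕ) : Heis k := ⟨1, 0, 0⟩
/-- The generator `Y`. -/
def Y (k : ℕ) : Heis k := ⟨0, 1, 0⟩
/-- The central element `Z`. -/
def Z (k : ℕ) : Heis k := ⟨0, 0, 1⟩

end Heis


section Aux

variable {k : ℕ}

/-- Equivalence with the triple of entries. -/
def heisEquiv (k : ℕ) : Heis k ≃ (ZMod k × ZMod k × ZMod k) where
  toFun x := (x.a, x.b, x.c)
  invFun p := ⟨p.1, p.2.1, p.2.2⟩
  left_inv x := rfl
  right_inv p := rfl

instance [NeZero k] : Finite (Heis k) := Finite.of_equiv _ (heisEquiv k).symm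

lemma card_heis [NeZero k] : Nat.card (Heis k) = k ^ 3 := by
  rw [Nat.card_congr (heisEquiv k), Nat.card_prod, Nat.card_prod, Nat.card_zmod]
  ring

lemma isotropic_card_le [NeZero k] (L : AddSubgroup (ZMod k × ZMod k))
    (hL : ∀ p ∈ L, ∀ q ∈ L, p.1 * q.2 = q.1 * p.2) : Nat.card L ≤ k := by
  set φ : L →+ ZMod k := (AddMonoidHom.fst (ZMod k) (ZMod k)).comp L.subtype with hφdef
  obtain ⟨g, hg⟩ := IsAddCyclic.exists_generator (α := φ.range)
  set a₀ : ZMod k := (g : ZMod k) with ha₀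
  have ha₀mem : a₀ ∈ φ.range := g.2
  set f : ZMod k →+ ZMod k := AddMonoidHom.mulLeft a₀ with hfdef
  have hrange : φ.range = f.range := by
    ext x
    constructor
    · intro hx
      obtain ⟨n, hn⟩ := hg ⟨x, hx⟩
      refine ⟨(n : ZMod k), ?_⟩
      have : (n • g : φ.range) = ⟨x, hx⟩ := hn
      have hx' : n • a₀ = x := congrArg Subtype.val this
      show a₀ * (n : ZMod k) = x
      rw [mul_comm, ← hx', zsmul_eq_mul]
    · rintro ⟨t, rfl⟩
      have h : a₀ * t = t.val • a₀ := by
        rw [nsmul_eq_mul, mul_comm, ZMod.natCast_val, ZMod.cast_id]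
      show a₀ * t ∈ φ.range
      rw [h]
      exact AddSubgroup.nsmul_mem _ ha₀mem _
  have hkercard : Nat.card φ.ker ≤ Nat.card f.ker := by
    obtain ⟨y, hy⟩ := ha₀mem
    have hy1 : (y : ZMod k × ZMod k).1 = a₀ := hy
    refine Nat.card_le_card_of_injective
      (fun x => ⟨((x : L) : ZMod k × ZMod k).2, ?_⟩) ?_
    · have hx1 : ((x : L) : ZMod k × ZMod k).1 = 0 := AddMonoidHom.mem_ker.mp x.2
      have h := hL (y : ZMod k × ZMod k) y.2 ((x : L) : ZMod k × ZMod k) (x : L).2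
      rw [AddMonoidHom.mem_ker]
      show a₀ * ((x : L) : ZMod k × ZMod k).2 = 0
      rw [← hy1, h, hx1, zero_mul]
    · intro x y hxy
      have h2 : ((x : L) : ZMod k × ZMod k).2 = ((y : L) : ZMod k × ZMod k).2 :=
        congrArg Subtype.val hxy
      have hx1 : ((x : L) : ZMod k × ZMod k).1 = 0 := AddMonoidHom.mem_ker.mp x.2
      have hy1' : ((y : L) : ZMod k × ZMod k).1 = 0 := AddMonoidHom.mem_ker.mp y.2
      ext
      · rw [hx1, hy1']
      · exact h2
  have hcardL : Nat.card L = Nat.card φ.range * Nat.card φ.ker := by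
    rw [AddSubgroup.card_eq_card_quotient_mul_card_addSubgroup φ.ker,
      Nat.card_congr (QuotientAddGroup.quotientKerEquivRange φ).toEquiv]
  have hcardk : Nat.card f.range * Nat.card f.ker = k := by
    rw [← Nat.card_congr (QuotientAddGroup.quotientKerEquivRange f).toEquiv,
      ← AddSubgroup.card_eq_card_quotient_mul_card_addSubgroup f.ker, Nat.card_zmod]
  calc Nat.card L = Nat.card φ.range * Nat.card φ.ker := hcardL
    _ ≤ Nat.card f.range * Nat.card f.ker := by
        rw [hrange]; exact Nat.mul_le_mul_left _ hkercard
    _ = k := hcardk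

lemma abelian_card_le [NeZero k] (A : Subgroup (Heis k))
    (hA : ∀ x ∈ A, ∀ y ∈ A, x * y = y * x) : Nat.card A ≤ k ^ 2 := by
  set L : AddSubgroup (ZMod k × ZMod k) :=
    { carrier := {p | ∃ x ∈ A, ((x.a, x.b) : ZMod k × ZMod k) = p}
      zero_mem' := ⟨1, A.one_mem, rfl⟩
      add_mem' := by
        rintro p q ⟨x, hx, rfl⟩ ⟨y, hy, rfl⟩
        exact ⟨x * y, A.mul_mem hx hy, rfl⟩
      neg_mem' := by
        rintro p ⟨x, hx, rfl⟩
        exact ⟨x⁻¹, A.inv_mem hx, rfl⟩ } with hLdef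
  have hLiso : ∀ p ∈ L, ∀ q ∈ L, p.1 * q.2 = q.1 * p.2 := by
    rintro p ⟨x, hx, rfl⟩ q ⟨y, hy, rfl⟩
    have := congrArg Heis.c (hA x hx y hy)
    simp only [Heis.mul_c] at this
    -- x.c + y.c + x.a * y.b = y.c + x.c + y.a * x.b
    have h : x.a * y.b = y.a * x.b := by linear_combination this
    exact h
  have hinj : Function.Injective
      (fun x : A => ((⟨((x : Heis k).a, (x : Heis k).b), ⟨(x : Heis k), x.2, rfl⟩⟩ : L),
        (x : Heis k).c)) := by
    intro x y hxy
    have h1 := congrArg (fun p => ((p.1 : ZMod k × ZMod k).1)) hxy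
    have h2 := congrArg (fun p => ((p.1 : ZMod k × ZMod k).2)) hxy
    have h3 := congrArg Prod.snd hxy
    ext
    · exact h1
    · exact h2
    · exact h3
  calc Nat.card A ≤ Nat.card (L × ZMod k) := Nat.card_le_card_of_injective _ hinj
    _ = Nat.card L * k := by rw [Nat.card_prod, Nat.card_zmod]
    _ ≤ k * k := Nat.mul_le_mul_right _ (isotropic_card_le L hLiso)
    _ = k ^ 2 := (sq k).symm

end Aux

/-- Every abelian subgroup of the finite Heisenberg group `H₃(ℤ/kℤ)` has index at
least `k`; consequently the family `H₃(ℤ/kℤ)` is not uniformly virtually abelian. -/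
theorem heisenberg_abelian_subgroup_index :
    (∀ k : ℕ, 1 ≤ k → ∀ A : Subgroup (Heis k),
      (∀ x ∈ A, ∀ y ∈ A, x * y = y * x) → k ≤ A.index) ∧
    (∀ C : ℕ, ∃ k : ℕ, ∀ A : Subgroup (Heis k),
      (∀ x ∈ A, ∀ y ∈ A, x * y = y * x) → C < A.index) := by

  have main : ∀ k : ℕ, 1 ≤ k → ∀ A : Subgroup (Heis k),
      (∀ x ∈ A, ∀ y ∈ A, x * y = y * x) → k ≤ A.index := by
    intro k hk A hA
    haveI : NeZero k := ⟨by omega⟩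
    have h1 : A.index * Nat.card A = k ^ 3 := by
      rw [Subgroup.index_mul_card, card_heis]
    have h2 : Nat.card A ≤ k ^ 2 := abelian_card_le A hA
    have h3 : 0 < Nat.card A := Nat.card_pos
    have h4 : k * Nat.card A ≤ A.index * Nat.card A := by
      rw [h1]
      calc k * Nat.card A ≤ k * k ^ 2 := Nat.mul_le_mul_left _ h2
        _ = k ^ 3 := by ring
    exact Nat.le_of_mul_le_mul_right h4 h3
  exact ⟨main, fun C => ⟨C + 1, fun A hA =>
    lt_of_lt_of_le (Nat.lt_succ_self C) (main (C + 1) (by omega) A hA)⟩⟩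
end

section
/- For the action of ℤ² on ℝ² × S¹ given by (a,b)·(x,y,z) = (x+a, y+b, e^{-2πikay}z), the maps X·(x,y,z) = (x+1/k, y, e^{-2πiy}z) and Y·(x,y,z) = (x, y+1/k, z) descend to well-defined maps on the quotient (ℝ² × S¹)/ℤ², i.e., they map ℤ²-orbits to ℤ²-orbits. -/
open Real

/-- Two points of `ℝ² × ℂ` are related iff they lie in the same orbit of the `ℤ²`-action
`(a,b)·(x,y,z) = (x+a, y+b, e^{-2πikay}z)` defining the degree-`k` Heisenberg nilmanifold. -/
def NilRel (k : ℕ) (p q : ℝ × ℝ × ℂ) : Prop :=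
  ∃ a b : ℤ, q = (p.1 + a, p.2.1 + b,
    Complex.exp (-2 * π * Complex.I * (k : ℂ) * (a : ℂ) * (p.2.1 : ℂ)) * p.2.2)

/-- The map `X·(x,y,z) = (x+1/k, y, e^{-2πiy}z)`. -/
noncomputable def Xmap (k : ℕ) (p : ℝ × ℝ × ℂ) : ℝ × ℝ × ℂ :=
  (p.1 + 1 / k, p.2.1, Complex.exp (-2 * π * Complex.I * (p.2.1 : ℂ)) * p.2.2)

/-- The map `Y·(x,y,z) = (x, y+1/k, z)`. -/
noncomputable def Ymap (k : ℕ) (p : ℝ × ℝ × ℂ) : ℝ × ℝ × ℂ :=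
  (p.1, p.2.1 + 1 / k, p.2.2)

/-- The map `Z·(x,y,z) = (x, y, e^{-2πi/k}z)`. -/
noncomputable def Zmap (k : ℕ) (p : ℝ × ℝ × ℂ) : ℝ × ℝ × ℂ :=
  (p.1, p.2.1, Complex.exp (-2 * π * Complex.I / (k : ℂ)) * p.2.2)

/-- `X` and `Y` map `ℤ²`-orbits to `ℤ²`-orbits, hence descend to the quotient
nilmanifold `Nil³ₖ = (ℝ² × S¹)/ℤ²`. -/
theorem Xmap_Ymap_descend (k : ℕ) (hk : 0 < k) (p q : ℝ × ℝ × ℂ) (h : NilRel k p q) :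
    NilRel k (Xmap k p) (Xmap k q) ∧ NilRel k (Ymap k p) (Ymap k q) := by
  obtain ⟨a, b, rfl⟩ := h
  constructor
  · refine ⟨a, b, ?_⟩
    simp only [Xmap, Prod.mk.injEq]
    refine ⟨by ring, trivial, ?_⟩
    push_cast
    rw [← mul_assoc, ← mul_assoc, ← Complex.exp_add, ← Complex.exp_add]
    congr 1
    rw [Complex.exp_eq_exp_iff_exists_int]
    exact ⟨-b, by push_cast; ring⟩
  · refine ⟨a, b, ?_⟩
    simp only [Ymap, Prod.mk.injEq]
    refine ⟨trivial, by ring, ?_⟩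
    push_cast
    congr 1
    rw [Complex.exp_eq_exp_iff_exists_int]
    refine ⟨a, ?_⟩
    have hk' : (k:ℂ) ≠ 0 := Nat.cast_ne_zero.mpr hk.ne'
    field_simp
    ring
end
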